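/- In a Hausdorff first-order topological structure in which every definable subset X has finite d(X) (where d(X) is the supremum of cardinalities of partitions of X into nonempty definable relatively clopen sets), every discrete definable subset is finite. -/

import Mathlib

/-!
An infinite discrete set `X` splits, for every `k`, into the singletons of a `k`-element
`S ⊆ X` and the nonempty remainder `X \ S`. Points are definable with parameters, so every
piece is definable, and every piece is relatively clopen because `X` is discrete; hence `d(X)`
exceeds every `k`.
-/

namespace Set

section Definability

variable {L : FirstOrder.Language} {M : Type*} [L.Structure M] {A s t : Set M}

theorem Definable₁.union (hs : A.Definable₁ L s) (ht : A.Definable₁ L t) :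
    A.Definable₁ L (s ∪ t) :=
  Definable.union hs ht

theorem Definable₁.sdiff (hs : A.Definable₁ L s) (ht : A.Definable₁ L t) :
    A.Definable₁ L (s \ t) :=
  Definable.sdiff hs ht

theorem Finite.definable₁ (hs : s.Finite) (hsA : s ⊆ A) : A.Definable₁ L s := by
  induction s, hs using Set.Finite.induction_on with
  | empty => exact definable_empty
  | @insert a s _ _ ih =>
    rw [insert_eq]
    exact (Definable.singleton_of_mem L (hsA (mem_insert a s))).union
      (ih ((subset_insert a s).trans hsA))

end Definability

variable {α : Type*}

open Classical in
noncomputable def singletonsAndRest (X : Set α) (S : Finset α) : Finset (Set α) :=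
  insert (X \ S) (S.image singleton)

variable {X : Set α} {S : Finset α} {s : Set α}

theorem mem_singletonsAndRest :
    s ∈ singletonsAndRest X S ↔ s = X \ S ∨ ∃ a ∈ S, {a} = s := by
  simp [singletonsAndRest]

theorem forall_mem_singletonsAndRest {p : Set α → Prop} :
    (∀ s ∈ singletonsAndRest X S, p s) ↔ p (X \ S) ∧ ∀ a ∈ S, p {a} := by
  simp [singletonsAndRest]

theorem card_le_card_singletonsAndRest : S.card ≤ (singletonsAndRest X S).card :=
  calc S.card = (S.image singleton).card :=
        (Finset.card_image_of_injective S singleton_injective).symm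
    _ ≤ _ := Finset.card_le_card (Finset.subset_insert _ _)

theorem pairwiseDisjoint_singletonsAndRest :
    (singletonsAndRest X S : Set (Set α)).PairwiseDisjoint id := by
  rintro s hs t ht hst
  rw [Finset.mem_coe, mem_singletonsAndRest] at hs ht
  rcases hs with rfl | ⟨a, ha, rfl⟩ <;> rcases ht with rfl | ⟨b, hb, rfl⟩
  · exact absurd rfl hst
  · exact disjoint_singleton_right.2 fun h => h.2 hb
  · exact disjoint_singleton_left.2 fun h => h.2 ha
  · exact disjoint_singleton.2 fun h => hst (h ▸ rfl)

theorem biUnion_singletonsAndRest (hSX : ↑S ⊆ X) : ⋃ s ∈ singletonsAndRest X S, s = X := by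
  simp only [singletonsAndRest, Finset.set_biUnion_insert, Finset.set_biUnion_finset_image,
    ← Finset.set_biUnion_coe, biUnion_of_singleton, sdiff_union_of_subset hSX]

end Set

theorem discrete_definable_finite_of_t2_of_finite_dX_general
    {L : FirstOrder.Language} {M : Type*} [L.Structure M] [TopologicalSpace M]
    (hd : ∀ X : Set M, Set.Definable₁ (Set.univ : Set M) L X →
      ∃ d : ℕ, ∀ P : Finset (Set M),
        (∀ s ∈ P, s.Nonempty) →
        (∀ s ∈ P, Set.Definable₁ (Set.univ : Set M) L s) →
        (∀ s ∈ P, IsClopen ((Subtype.val ⁻¹' s : Set X))) →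
        (∀ s ∈ P, s ⊆ X) →
        (P : Set (Set M)).PairwiseDisjoint id →
        (⋃ s ∈ P, s) = X →
        P.card ≤ d)
    (X : Set M) (hXdef : Set.Definable₁ (Set.univ : Set M) L X)
    (hXdisc : DiscreteTopology X) :
    X.Finite := by
  refine Set.not_infinite.1 fun hinf => ?_
  obtain ⟨d, hd⟩ := hd X hXdef
  obtain ⟨S, hSX, hScard⟩ := hinf.exists_subset_card_eq (d + 1)
  have hcard := hd (X.singletonsAndRest S)
    (Set.forall_mem_singletonsAndRest.2 ⟨(hinf.sdiff S.finite_toSet).nonempty,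
      fun a _ => Set.singleton_nonempty a⟩)
    (Set.forall_mem_singletonsAndRest.2
      ⟨hXdef.sdiff (S.finite_toSet.definable₁ (Set.subset_univ _)),
        fun a _ => Set.Definable.singleton_of_mem L (Set.mem_univ a)⟩)
    (fun s _ => isClopen_discrete _)
    (Set.forall_mem_singletonsAndRest.2
      ⟨Set.sdiff_subset, fun a ha => Set.singleton_subset_iff.2 (hSX ha)⟩)
    Set.pairwiseDisjoint_singletonsAndRest (Set.biUnion_singletonsAndRest hSX)
  have := Set.card_le_card_singletonsAndRest (X := X) (S := S)
  omega

/-- In a Hausdorff first-order topological structure (the topology has a basis uniformly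
defined by a formula `B(x, ȳ)`) in which every definable subset `X` has `d(X) < ∞`
(there is a finite bound on partitions of `X` into nonempty definable relatively clopen
sets), every discrete definable subset is finite. -/
theorem discrete_definable_finite_of_t2_of_finite_dX
    {L : FirstOrder.Language} {M : Type*} [L.Structure M] [TopologicalSpace M] [T2Space M]
    {n : ℕ} (B : L.Formula (Fin (n + 1)))
    (hbasis : TopologicalSpace.IsTopologicalBasis
      {s : Set M | ∃ a : Fin n → M, s = {x : M | B.Realize (Fin.cons x a)}})
    (hd : ∀ X : Set M, Set.Definable₁ (Set.univ : Set M) L X →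
      ∃ d : ℕ, ∀ P : Finset (Set M),
        (∀ s ∈ P, s.Nonempty) →
        (∀ s ∈ P, Set.Definable₁ (Set.univ : Set M) L s) →
        (∀ s ∈ P, IsClopen ((Subtype.val ⁻¹' s : Set X))) →
        (∀ s ∈ P, s ⊆ X) →
        (P : Set (Set M)).PairwiseDisjoint id →
        (⋃ s ∈ P, s) = X →
        P.card ≤ d)
    (X : Set M) (hXdef : Set.Definable₁ (Set.univ : Set M) L X)
    (hXdisc : DiscreteTopology X) :
    X.Finite :=
  discrete_definable_finite_of_t2_of_finite_dX_general hd X hXdef hXdisc
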